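/- arXiv:1811.07448 — 2 statements merged into one kernel-verified Lean document; each statement's English description precedes it below -/
import Mathlib

section
/- Let G ∈ G(n,d,k,w) be the grid induced by the (n,w)-interval partition I = (I_1,...,I_t), and for 1 ≤ i ≤ t set Ī_i = I_i ∪ I_{i+1}[:k−1] and ∂I_i = I_i[:k−1] ∪ I_{i+1}[:k−1], where I_{t+1} = ∅. Then every G-block B has the form B = ∏_{j=1}^d I_{i_j}[k:] for some (not necessarily distinct) indices i_1,...,i_d ∈ [t]; moreover its closure is B̄ = ∏_{j=1}^d Ī_{i_j} and its boundary is ∂B = ⋃_{j=1}^d Ī_{i_1} × ... × Ī_{i_{j−1}} × ∂I_{i_j} × Ī_{i_{j+1}} × ... × Ī_{i_d}. -/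
open Finset

/-- `I[:ℓ]`: the set of the `ℓ` smallest elements of `I` (or `I` itself if `|I| < ℓ`). -/
def takeSmallest (I : Finset ℕ) (ℓ : ℕ) : Finset ℕ :=
  I.filter fun x => (I.filter fun y => y ≤ x).card ≤ ℓ

/-- `I[ℓ+1:] = I \ I[:ℓ]`. -/
def dropSmallest (I : Finset ℕ) (ℓ : ℕ) : Finset ℕ :=
  I \ takeSmallest I ℓ

/-- An `(n,w)`-interval partition: a partition of `[n] = {1,…,n}` into consecutive,
pairwise disjoint intervals `I_1, …, I_t`, each of size `w` or `w+1`, where for `j < j'`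
every element of `I j` is smaller than every element of `I j'`. -/
structure IntervalPartition (n w : ℕ) where
  t : ℕ
  I : Fin t → Finset ℕ
  interval : ∀ j, ∃ a b, 1 ≤ a ∧ a ≤ b ∧ b ≤ n ∧ I j = Finset.Icc a b
  size : ∀ j, (I j).card = w ∨ (I j).card = w + 1
  cover : ∀ x ∈ Finset.Icc 1 n, ∃ j, x ∈ I j
  ordered : ∀ j j' : Fin t, j < j' → ∀ x ∈ I j, ∀ y ∈ I j', x < y

/-- The hypergrid `[n]^d`, as a set of tuples. -/
def cube (n d : ℕ) : Set (Fin d → ℕ) :=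
  {x | ∀ i, 1 ≤ x i ∧ x i ≤ n}

/-- The `(n,d,k,w)`-grid induced by an `(n,w)`-interval partition. -/
def gridOf (n d k w : ℕ) (P : IntervalPartition n w) : Set (Fin d → ℕ) :=
  {x ∈ cube n d | ∃ i : Fin d, ∃ j : Fin P.t, x i ∈ takeSmallest (P.I j) (k - 1)}

/-- `G ∈ 𝒢(n,d,k,w)`: `G` is the grid induced by some `(n,w)`-interval partition. -/
def IsGrid (n d k w : ℕ) (G : Set (Fin d → ℕ)) : Prop :=
  ∃ P : IntervalPartition n w, G = gridOf n d k w P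

/-- Two entries of `[n]^d` are neighbors if `∑ i, |x i − y i| = 1`. -/
def Neighbor {d : ℕ} (x y : Fin d → ℕ) : Prop :=
  (∑ i, Nat.dist (x i) (y i)) = 1

/-- A `G`-block: a connected component of the neighborhood graph on `[n]^d \ G`. -/
def IsBlock (n d : ℕ) (G B : Set (Fin d → ℕ)) : Prop :=
  B.Nonempty ∧ B ⊆ cube n d \ G ∧
    (∀ x ∈ B, ∀ y ∈ B,
      Relation.ReflTransGen
        (fun a b => a ∈ cube n d \ G ∧ b ∈ cube n d \ G ∧ Neighbor a b) x y) ∧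
    (∀ x ∈ B, ∀ y, y ∈ cube n d \ G → Neighbor x y → y ∈ B)

/-- The closure `B̄` of a block `B`. -/
def blockClosure (n d k : ℕ) (B : Set (Fin d → ℕ)) : Set (Fin d → ℕ) :=
  {x ∈ cube n d | ∃ y ∈ B, ∀ i, Nat.dist (x i) (y i) < k}

/-- The boundary `∂B = B̄ \ B` of a block `B`. -/
def blockBoundary (n d k : ℕ) (B : Set (Fin d → ℕ)) : Set (Fin d → ℕ) :=
  blockClosure n d k B \ B

/-- The first `k-1` elements of the interval following `I j` (empty if `I j` is last). -/
def nextTake {n w : ℕ} (P : IntervalPartition n w) (k : ℕ) (j : Fin P.t) : Finset ℕ :=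
  if h : (j : ℕ) + 1 < P.t then takeSmallest (P.I ⟨(j : ℕ) + 1, h⟩) (k - 1) else ∅

/-- `Ī_j = I_j ∪ I_{j+1}[:k−1]` (with `I_{t+1} = ∅`). -/
def Ibar {n w : ℕ} (P : IntervalPartition n w) (k : ℕ) (j : Fin P.t) : Finset ℕ :=
  P.I j ∪ nextTake P k j

/-- `∂I_j = I_j[:k−1] ∪ I_{j+1}[:k−1]` (with `I_{t+1} = ∅`). -/
def Ibd {n w : ℕ} (P : IntervalPartition n w) (k : ℕ) (j : Fin P.t) : Finset ℕ :=
  takeSmallest (P.I j) (k - 1) ∪ nextTake P k j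

/-!
A coordinate value of `[n]` avoids the grid iff it lies in `I_j[k:]` for some (unique) `j`, so
the complement of the grid is the disjoint union of the boxes `∏ᵢ I_{f i}[k:]`. Each box is
connected, and a unit step out of `I_j[k:]` lands in `I_j[:k-1]`, in `I_{j+1}[:k-1]` (both
nonempty as `k ≥ 2`) or outside `[n]`; hence the blocks are exactly these boxes. Closure and
boundary of a box factor coordinatewise, and the values within distance `< k` of `I_j[k:]` form
`Ī_j`, since `I_{j+1}` has at least `w ≥ k` elements and the last interval ends at `n`.
-/

theorem takeSmallest_subset (I : Finset ℕ) (ℓ : ℕ) : takeSmallest I ℓ ⊆ I :=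
  filter_subset _ _

theorem mem_takeSmallest_Icc {a b ℓ x : ℕ} :
    x ∈ takeSmallest (Icc a b) ℓ ↔ a ≤ x ∧ x ≤ b ∧ x < a + ℓ := by
  have h : (Icc a b).filter (· ≤ x) = Icc a (min b x) := by
    ext y
    simp only [mem_filter, mem_Icc]
    omega
  rw [takeSmallest, mem_filter, h, Nat.card_Icc, mem_Icc]
  omega

theorem dropSmallest_Icc (a b ℓ : ℕ) : dropSmallest (Icc a b) ℓ = Icc (a + ℓ) b := by
  ext x
  rw [dropSmallest, mem_sdiff, mem_takeSmallest_Icc, mem_Icc, mem_Icc]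
  omega

namespace IntervalPartition

variable {n w : ℕ} (P : IntervalPartition n w)

noncomputable def lo (j : Fin P.t) : ℕ := (P.interval j).choose

noncomputable def hi (j : Fin P.t) : ℕ := (P.interval j).choose_spec.choose

theorem one_le_lo (j : Fin P.t) : 1 ≤ P.lo j :=
  (P.interval j).choose_spec.choose_spec.1

theorem hi_le (j : Fin P.t) : P.hi j ≤ n :=
  (P.interval j).choose_spec.choose_spec.2.2.1

theorem lo_le_hi (j : Fin P.t) : P.lo j ≤ P.hi j :=
  (P.interval j).choose_spec.choose_spec.2.1

theorem I_eq_Icc (j : Fin P.t) : P.I j = Icc (P.lo j) (P.hi j) :=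
  (P.interval j).choose_spec.choose_spec.2.2.2

theorem mem_I {j : Fin P.t} {u : ℕ} : u ∈ P.I j ↔ P.lo j ≤ u ∧ u ≤ P.hi j := by
  rw [I_eq_Icc, mem_Icc]

theorem lo_add_le_hi_add_one {k : ℕ} (hkw : k ≤ w) (j : Fin P.t) :
    P.lo j + k ≤ P.hi j + 1 := by
  have hsize := P.size j
  rw [P.I_eq_Icc, Nat.card_Icc] at hsize
  have := P.lo_le_hi j
  omega

theorem le_of_mem_of_mem_of_lt {j j' : Fin P.t} {u v : ℕ} (hu : u ∈ P.I j) (hv : v ∈ P.I j')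
    (huv : u < v) : j ≤ j' :=
  le_of_not_gt fun h => (P.ordered j' j h v hv u hu).not_gt huv

theorem eq_of_mem_of_mem {j j' : Fin P.t} {u : ℕ} (hj : u ∈ P.I j) (hj' : u ∈ P.I j') :
    j = j' := by
  by_contra hne
  rcases lt_or_gt_of_ne hne with h | h
  · exact (P.ordered j j' h u hj u hj').false
  · exact (P.ordered j' j h u hj' u hj).false

theorem lo_succ {j : Fin P.t} (h : (j : ℕ) + 1 < P.t) : P.lo ⟨j + 1, h⟩ = P.hi j + 1 := by
  set j' : Fin P.t := ⟨j + 1, h⟩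
  have hgap : P.hi j < P.lo j' :=
    P.ordered j j' (Fin.lt_def.2 (Nat.lt_succ_self _)) _ (P.mem_I.2 ⟨P.lo_le_hi j, le_rfl⟩)
      _ (P.mem_I.2 ⟨le_rfl, P.lo_le_hi j'⟩)
  refine le_antisymm (not_lt.1 fun hlt => ?_) hgap
  have := P.lo_le_hi j'
  have := P.hi_le j'
  obtain ⟨m, hm⟩ := P.cover (P.hi j + 1) (mem_Icc.2 ⟨by omega, by omega⟩)
  have hjm : j ≤ m := P.le_of_mem_of_mem_of_lt (P.mem_I.2 ⟨P.lo_le_hi j, le_rfl⟩) hm (by omega)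
  have hmj' : m ≤ j' := P.le_of_mem_of_mem_of_lt hm (P.mem_I.2 ⟨le_rfl, P.lo_le_hi j'⟩) hlt
  have hmj : m ≠ j := fun h => by have := (P.mem_I.1 (h ▸ hm)).2; omega
  have hmj'' : m ≠ j' := fun h => by have := (P.mem_I.1 (h ▸ hm)).1; omega
  have := Fin.lt_def.1 (lt_of_le_of_ne hjm hmj.symm)
  have := Fin.lt_def.1 (lt_of_le_of_ne hmj' hmj'')
  simp only [j'] at *
  omega

theorem hi_eq_of_not_lt {j : Fin P.t} (h : ¬(j : ℕ) + 1 < P.t) : P.hi j = n := by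
  refine le_antisymm (P.hi_le j) (not_lt.1 fun hlt => ?_)
  have := P.one_le_lo j
  have := P.lo_le_hi j
  obtain ⟨m, hm⟩ := P.cover n (mem_Icc.2 ⟨by omega, le_rfl⟩)
  have hjm : j ≤ m := P.le_of_mem_of_mem_of_lt (P.mem_I.2 ⟨P.lo_le_hi j, le_rfl⟩) hm hlt
  have hmj : m = j := le_antisymm (Fin.le_def.2 (by omega)) hjm
  have := (P.mem_I.1 (hmj ▸ hm)).2
  omega

end IntervalPartition

section Coordinates

variable {n w k : ℕ} (P : IntervalPartition n w)

theorem nextTake_disjoint (j : Fin P.t) : Disjoint (nextTake P k j) (P.I j) := by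
  unfold nextTake
  split_ifs with h
  · refine disjoint_left.2 fun u hu hj => ?_
    have := P.eq_of_mem_of_mem (takeSmallest_subset _ _ hu) hj
    simp [Fin.ext_iff] at this
  · exact disjoint_empty_left _

theorem Ibd_eq_Ibar_sdiff (j : Fin P.t) :
    Ibd P k j = Ibar P k j \ dropSmallest (P.I j) (k - 1) := by
  ext u
  have htake := @takeSmallest_subset (P.I j) (k - 1) u
  have hnext : u ∈ nextTake P k j → u ∉ P.I j := fun hu =>
    disjoint_left.1 (nextTake_disjoint P j) hu
  simp only [Ibd, Ibar, dropSmallest, mem_union, mem_sdiff]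
  tauto

theorem mem_Ibar (hk : 1 ≤ k) (hkw : k ≤ w) {j : Fin P.t} {u : ℕ} :
    u ∈ Ibar P k j ↔ P.lo j ≤ u ∧ u < P.hi j + k ∧ u ≤ n := by
  have := P.lo_le_hi j
  have := P.hi_le j
  by_cases h : (j : ℕ) + 1 < P.t
  · have hsucc := P.lo_succ h
    have := P.lo_add_le_hi_add_one hkw ⟨j + 1, h⟩
    have := P.hi_le ⟨j + 1, h⟩
    rw [Ibar, nextTake, dif_pos h, mem_union, P.mem_I, P.I_eq_Icc, mem_takeSmallest_Icc, hsucc]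
    omega
  · rw [Ibar, nextTake, dif_neg h, union_empty, P.mem_I, P.hi_eq_of_not_lt h]
    omega

theorem exists_mem_dropSmallest_iff {u : ℕ} :
    (∃ j, u ∈ dropSmallest (P.I j) k) ↔ (1 ≤ u ∧ u ≤ n) ∧ ∀ j, u ∉ takeSmallest (P.I j) k := by
  constructor
  · rintro ⟨j, hu⟩
    obtain ⟨huj, hut⟩ := mem_sdiff.1 hu
    have := P.mem_I.1 huj
    have := P.one_le_lo j
    have := P.hi_le j
    refine ⟨by omega, fun j' hj' => ?_⟩
    obtain rfl := P.eq_of_mem_of_mem huj (takeSmallest_subset _ _ hj')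
    exact hut hj'
  · rintro ⟨hu, hfree⟩
    obtain ⟨j, hj⟩ := P.cover u (mem_Icc.2 hu)
    exact ⟨j, mem_sdiff.2 ⟨hj, hfree j⟩⟩

theorem eq_of_mem_dropSmallest_of_dist_eq_one (hk : 2 ≤ k) {j j' : Fin P.t} {u v : ℕ}
    (hu : u ∈ dropSmallest (P.I j) (k - 1)) (hv : v ∈ dropSmallest (P.I j') (k - 1))
    (huv : Nat.dist u v = 1) : j = j' := by
  rw [P.I_eq_Icc, dropSmallest_Icc, mem_Icc] at hu hv
  unfold Nat.dist at huv
  -- the smaller of `u`, `v` lies in both intervals, as `I_j[k:]` misses `min I_j` when `k ≥ 2`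
  rcases Nat.lt_or_gt_of_ne (show u ≠ v by omega) with h | h
  · exact P.eq_of_mem_of_mem (u := u) (P.mem_I.2 ⟨by omega, by omega⟩)
      (P.mem_I.2 ⟨by omega, by omega⟩)
  · exact P.eq_of_mem_of_mem (u := v) (P.mem_I.2 ⟨by omega, by omega⟩)
      (P.mem_I.2 ⟨by omega, by omega⟩)

theorem mem_Ibar_iff_exists_dist_lt (hk : 1 ≤ k) (hkw : k ≤ w) {j : Fin P.t} {u : ℕ} :
    u ∈ Ibar P k j ↔ (1 ≤ u ∧ u ≤ n) ∧ ∃ v ∈ dropSmallest (P.I j) (k - 1), Nat.dist u v < k := by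
  have := P.one_le_lo j
  have := P.lo_add_le_hi_add_one hkw j
  simp only [mem_Ibar P hk hkw, P.I_eq_Icc, dropSmallest_Icc, mem_Icc, Nat.dist]
  constructor
  · intro hu
    exact ⟨by omega, max (P.lo j + (k - 1)) (min u (P.hi j)), by omega, by omega⟩
  · rintro ⟨hu, v, hv, huv⟩
    omega

end Coordinates

section Neighbors

variable {d : ℕ}

theorem sum_dist_update_add (x y : Fin d → ℕ) (i : Fin d) (c : ℕ) :
    ∑ j, Nat.dist (Function.update x i c j) (y j) + Nat.dist (x i) (y i) =
      ∑ j, Nat.dist (x j) (y j) + Nat.dist c (y i) := by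
  rw [← add_sum_erase _ _ (mem_univ i), ← add_sum_erase _ _ (mem_univ i), Function.update_self,
    sum_congr rfl fun j hj => by rw [Function.update_of_ne (ne_of_mem_erase hj)]]
  ring

theorem neighbor_update {x : Fin d → ℕ} {i : Fin d} {c : ℕ} (h : Nat.dist (x i) c = 1) :
    Neighbor x (Function.update x i c) := by
  have := sum_dist_update_add x x i c
  simp only [Nat.dist_self, sum_const_zero, add_zero] at this
  simp only [Neighbor, Nat.dist_comm (x _)]
  rw [this, Nat.dist_comm, h]

theorem Neighbor.exists_dist_eq_one {x y : Fin d → ℕ} (h : Neighbor x y) :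
    ∃ i, Nat.dist (x i) (y i) = 1 ∧ ∀ j ≠ i, x j = y j := by
  obtain ⟨i, hi⟩ : ∃ i, Nat.dist (x i) (y i) ≠ 0 := by
    by_contra! hzero
    simp [Neighbor, hzero] at h
  have hsplit := add_sum_erase univ (fun j => Nat.dist (x j) (y j)) (mem_univ i)
  rw [show ∑ j, Nat.dist (x j) (y j) = 1 from h] at hsplit
  have hrest := sum_eq_zero_iff.1 (show ∑ j ∈ univ.erase i, Nat.dist (x j) (y j) = 0 by omega)
  exact ⟨i, by omega, fun j hj => Nat.eq_of_dist_eq_zero (hrest j (mem_erase.2 ⟨hj, mem_univ j⟩))⟩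

theorem reflTransGen_neighbor_of_mem_pi_Icc (lo hi : Fin d → ℕ) {x y : Fin d → ℕ}
    (hx : x ∈ Set.univ.pi fun i => Set.Icc (lo i) (hi i))
    (hy : y ∈ Set.univ.pi fun i => Set.Icc (lo i) (hi i)) :
    Relation.ReflTransGen (fun u v => u ∈ Set.univ.pi (fun i => Set.Icc (lo i) (hi i)) ∧
      v ∈ Set.univ.pi (fun i => Set.Icc (lo i) (hi i)) ∧ Neighbor u v) x y := by
  induction hN : ∑ i, Nat.dist (x i) (y i) using Nat.strong_induction_on generalizing x with
  | _ N ih =>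
  by_cases hxy : x = y
  · exact hxy ▸ .refl
  obtain ⟨i, hne⟩ := Function.ne_iff.1 hxy
  set c := if x i < y i then x i + 1 else x i - 1
  have hc : Nat.dist (x i) c = 1 ∧ Nat.dist c (y i) + 1 = Nat.dist (x i) (y i) := by
    simp only [c, Nat.dist]
    split_ifs <;> omega
  have hx' : Function.update x i c ∈ Set.univ.pi fun i => Set.Icc (lo i) (hi i) := by
    intro j _
    rcases eq_or_ne j i with rfl | hj
    · have := hx j trivial
      have := hy j trivial
      simp only [Set.mem_Icc, Function.update_self, c] at *
      split_ifs <;> omega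
    · simpa [Function.update_of_ne hj] using hx j trivial
  have hdecr := sum_dist_update_add x y i c
  exact .head ⟨hx, hx', neighbor_update hc.1⟩ (ih _ (by omega) hx' rfl)

end Neighbors

theorem setOf_forall_mem_diff {ι α : Type*} [DecidableEq α] (S T : ι → Finset α) :
    {x : ι → α | ∀ i, x i ∈ T i} \ {x | ∀ i, x i ∈ S i} =
      ⋃ i, {x | x i ∈ T i \ S i ∧ ∀ i' ≠ i, x i' ∈ T i'} := by
  ext x
  simp only [Set.mem_sdiff, Set.mem_ofPred_eq, Set.mem_iUnion, Finset.mem_sdiff, not_forall]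
  constructor
  · rintro ⟨hT, i, hS⟩
    exact ⟨i, ⟨hT i, hS⟩, fun i' _ => hT i'⟩
  · rintro ⟨i, ⟨hTi, hSi⟩, hT⟩
    refine ⟨fun i' => ?_, i, hSi⟩
    rcases eq_or_ne i' i with rfl | hi'
    exacts [hTi, hT i' hi']

section Blocks

variable {n d : ℕ}

theorem IsBlock.eq_of_mem {G B R : Set (Fin d → ℕ)} (hB : IsBlock n d G B)
    (hRfree : R ⊆ cube n d \ G)
    (hRconn : ∀ x ∈ R, ∀ y ∈ R,
      Relation.ReflTransGen (fun u v => u ∈ R ∧ v ∈ R ∧ Neighbor u v) x y)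
    (hRclosed : ∀ x ∈ R, ∀ y ∈ cube n d \ G, Neighbor x y → y ∈ R)
    {x₀ : Fin d → ℕ} (hx₀B : x₀ ∈ B) (hx₀R : x₀ ∈ R) : B = R := by
  obtain ⟨-, -, hBconn, hBclosed⟩ := hB
  refine Set.Subset.antisymm (fun y hy => ?_) (fun y hy => ?_)
  · have hpath := hBconn x₀ hx₀B y hy
    clear hy
    induction hpath with
    | refl => exact hx₀R
    | tail _ hstep ih => exact hRclosed _ ih _ hstep.2.1 hstep.2.2
  · have hpath := hRconn x₀ hx₀R y hy
    clear hy
    induction hpath with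
    | refl => exact hx₀B
    | tail _ hstep ih => exact hBclosed _ ih _ (hRfree hstep.2.1) hstep.2.2

theorem blockClosure_setOf_forall_mem (k : ℕ) (S : Fin d → Finset ℕ) :
    blockClosure n d k {x | ∀ i, x i ∈ S i} =
      {x | ∀ i, (1 ≤ x i ∧ x i ≤ n) ∧ ∃ v ∈ S i, Nat.dist (x i) v < k} := by
  ext x
  constructor
  · rintro ⟨hx, y, hy, hxy⟩ i
    exact ⟨hx i, y i, hy i, hxy i⟩
  · intro h
    choose hx y hy hxy using h
    exact ⟨hx, y, hy, hxy⟩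

variable {w k : ℕ} (P : IntervalPartition n w)

theorem cube_diff_gridOf :
    cube n d \ gridOf n d k w P = {x | ∀ i, ∃ j, x i ∈ dropSmallest (P.I j) (k - 1)} := by
  ext x
  simp only [exists_mem_dropSmallest_iff, cube, gridOf, Set.mem_sdiff, Set.mem_ofPred_eq]
  grind

theorem IsBlock.eq_setOf_mem_dropSmallest (hk : 2 ≤ k) {B : Set (Fin d → ℕ)}
    (hB : IsBlock n d (gridOf n d k w P) B) {x₀ : Fin d → ℕ} (hx₀ : x₀ ∈ B)
    {f : Fin d → Fin P.t} (hf : ∀ i, x₀ i ∈ dropSmallest (P.I (f i)) (k - 1)) :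
    B = {x | ∀ i, x i ∈ dropSmallest (P.I (f i)) (k - 1)} := by
  have hbox : {x : Fin d → ℕ | ∀ i, x i ∈ dropSmallest (P.I (f i)) (k - 1)} =
      Set.univ.pi fun i => Set.Icc (P.lo (f i) + (k - 1)) (P.hi (f i)) := by
    ext x
    simp only [Set.mem_ofPred_eq, Set.mem_univ_pi, P.I_eq_Icc, dropSmallest_Icc, mem_Icc,
      Set.mem_Icc]
  refine hB.eq_of_mem (fun x hx => ?_) ?_ (fun x hx y hy hxy => ?_) hx₀ hf
  · rw [cube_diff_gridOf]
    exact fun i => ⟨f i, hx i⟩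
  · rw [hbox]
    exact fun x hx y hy => reflTransGen_neighbor_of_mem_pi_Icc _ _ hx hy
  · obtain ⟨i, hi, heq⟩ := hxy.exists_dist_eq_one
    rw [cube_diff_gridOf] at hy
    obtain ⟨j, hj⟩ := hy i
    intro i'
    rcases eq_or_ne i' i with rfl | hi'
    · obtain rfl := eq_of_mem_dropSmallest_of_dist_eq_one P hk (hx i') hj hi
      exact hj
    · exact heq i' hi' ▸ hx i'

end Blocks

theorem block_product_structure_general (n d k w : ℕ) (hk : 2 ≤ k)
    (hkw : k ≤ w) (P : IntervalPartition n w)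
    (B : Set (Fin d → ℕ)) (hB : IsBlock n d (gridOf n d k w P) B) :
    ∃ f : Fin d → Fin P.t,
      B = {x | ∀ j, x j ∈ dropSmallest (P.I (f j)) (k - 1)} ∧
      blockClosure n d k B = {x | ∀ j, x j ∈ Ibar P k (f j)} ∧
      blockBoundary n d k B =
        ⋃ j : Fin d,
          {x | x j ∈ Ibd P k (f j) ∧ ∀ j', j' ≠ j → x j' ∈ Ibar P k (f j')} := by
  obtain ⟨x₀, hx₀⟩ := hB.1
  have hfree := hB.2.1 hx₀
  rw [cube_diff_gridOf] at hfree
  choose f hf using hfree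
  have hBeq := hB.eq_setOf_mem_dropSmallest P hk hx₀ hf
  have hclosure : blockClosure n d k B = {x | ∀ j, x j ∈ Ibar P k (f j)} := by
    simp only [hBeq, blockClosure_setOf_forall_mem, mem_Ibar_iff_exists_dist_lt P (by omega) hkw]
  refine ⟨f, hBeq, hclosure, ?_⟩
  rw [blockBoundary, hclosure, hBeq, setOf_forall_mem_diff]
  simp only [Ibd_eq_Ibar_sdiff]

/-- Every block of the grid induced by the partition `P` is of the form
`∏_j I_{i_j}[k:]`, its closure is `∏_j Ī_{i_j}`, and its boundary is
`⋃_j Ī_{i_1} × ⋯ × ∂I_{i_j} × ⋯ × Ī_{i_d}`. -/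
theorem block_product_structure (n d k w : ℕ) (hd : 1 ≤ d) (hk : 2 ≤ k)
    (hkw : k ≤ w) (hwn : w ≤ n) (P : IntervalPartition n w)
    (B : Set (Fin d → ℕ)) (hB : IsBlock n d (gridOf n d k w P) B) :
    ∃ f : Fin d → Fin P.t,
      B = {x | ∀ j, x j ∈ dropSmallest (P.I (f j)) (k - 1)} ∧
      blockClosure n d k B = {x | ∀ j, x j ∈ Ibar P k (f j)} ∧
      blockBoundary n d k B =
        ⋃ j : Fin d,
          {x | x j ∈ Ibd P k (f j) ∧ ∀ j', j' ≠ j → x j' ∈ Ibar P k (f j')} :=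
  block_product_structure_general n d k w hk hkw P B hB
end

section
/- For all integers d ≥ 1 and 2 ≤ k ≤ w ≤ n, an (n,d,k,w)-system of grids exists. -/
open Finset

/-- A valid location of a width-`k` subarray in `[n]^d`: an element of `[n−k+1]^d`. -/
def ValidLoc (n d k : ℕ) (a : Fin d → ℕ) : Prop :=
  ∀ i, 1 ≤ a i ∧ a i ≤ n - k + 1

/-- The width-`k` box with lowest corner `a`: `{a_1,…,a_1+k−1} × ⋯ × {a_d,…,a_d+k−1}`. -/
def kbox (d k : ℕ) (a : Fin d → ℕ) : Set (Fin d → ℕ) :=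
  {x | ∀ i, a i ≤ x i ∧ x i ≤ a i + k - 1}

/-- Some forbidden pattern of `F` occurs as a consecutive subarray of `A` at location `a`;
patterns are compared on `[k]^d`. -/
def HasCopyAt {σ : Type*} (d k : ℕ) (F : Set ((Fin d → ℕ) → σ))
    (A : (Fin d → ℕ) → σ) (a : Fin d → ℕ) : Prop :=
  ∃ S ∈ F, ∀ j : Fin d → ℕ, (∀ i, 1 ≤ j i ∧ j i ≤ k) →
    A (fun i => a i + j i - 1) = S j

/-- `A` contains an `F`-copy lying inside the set `X`. -/
def HasCopyIn {σ : Type*} (n d k : ℕ) (F : Set ((Fin d → ℕ) → σ))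
    (A : (Fin d → ℕ) → σ) (X : Set (Fin d → ℕ)) : Prop :=
  ∃ a, ValidLoc n d k a ∧ HasCopyAt d k F A a ∧ kbox d k a ⊆ X

/-- `A` satisfies the `k`-local property `P(F)`: it contains no `F`-copy. -/
def SatisfiesP {σ : Type*} (n d k : ℕ) (F : Set ((Fin d → ℕ) → σ))
    (A : (Fin d → ℕ) → σ) : Prop :=
  ¬ ∃ a, ValidLoc n d k a ∧ HasCopyAt d k F A a

/-- `A` is `ε`-far from `P(F)`: every array satisfying `P(F)` differs from `A`
in at least `ε·n^d` entries of `[n]^d`. -/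
def FarFrom {σ : Type*} (n d k : ℕ) (F : Set ((Fin d → ℕ) → σ)) (ε : ℝ)
    (A : (Fin d → ℕ) → σ) : Prop :=
  ∀ A' : (Fin d → ℕ) → σ, SatisfiesP n d k F A' →
    ε * (n : ℝ) ^ d ≤ ({x | x ∈ cube n d ∧ A x ≠ A' x}).ncard

/-- A block `B` is `(P,A)`-unrepairable: every array agreeing with `A` on `∂B`
(including `A` itself) contains an `F`-copy lying inside `B̄`. -/
def Unrepairable {σ : Type*} (n d k : ℕ) (F : Set ((Fin d → ℕ) → σ))
    (A : (Fin d → ℕ) → σ) (B : Set (Fin d → ℕ)) : Prop :=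
  ∀ A' : (Fin d → ℕ) → σ, (∀ x ∈ blockBoundary n d k B, A' x = A x) →
    HasCopyIn n d k F A' (blockClosure n d k B)

/-- `r = ⌊log₂(n/w)⌋`. -/
def sysR (n w : ℕ) : ℕ := Nat.log 2 (n / w)

/-- An `(n,d,k,w)`-system of grids `(G_0, …, G_r)` with `r = ⌊log₂(n/w)⌋`:
`G_i ∈ 𝒢(n,d,k,⌊n/2^(r−i)⌋)` and `G_0 ⊇ G_1 ⊇ ⋯ ⊇ G_r`. -/
structure GridSystem (n d k w : ℕ) where
  G : ℕ → Set (Fin d → ℕ)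
  isGrid : ∀ i ≤ sysR n w, IsGrid n d k (n / 2 ^ (sysR n w - i)) (G i)
  nested : ∀ i j : ℕ, j ≤ i → i ≤ sysR n w → G i ⊆ G j

/-- A `G_i`-block `B` is a `(P,A)`-witness: either `i = 0` and `A` contains an `F`-copy
inside `B̄`, or `i > 0` and `B` is `(P,A)`-unrepairable. -/
def IsWitness {σ : Type*} (n d k w : ℕ) (S : GridSystem n d k w)
    (F : Set ((Fin d → ℕ) → σ)) (A : (Fin d → ℕ) → σ)
    (i : ℕ) (B : Set (Fin d → ℕ)) : Prop :=
  i ≤ sysR n w ∧ IsBlock n d (S.G i) B ∧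
    ((i = 0 ∧ HasCopyIn n d k F A (blockClosure n d k B)) ∨
      (0 < i ∧ Unrepairable n d k F A B))

/-- A witness is maximal if all of its ancestors (blocks of coarser grids containing it)
are `(P,A)`-repairable. -/
def IsMaximalWitness {σ : Type*} (n d k w : ℕ) (S : GridSystem n d k w)
    (F : Set ((Fin d → ℕ) → σ)) (A : (Fin d → ℕ) → σ)
    (i : ℕ) (B : Set (Fin d → ℕ)) : Prop :=
  IsWitness n d k w S F A i B ∧
    ∀ j, i < j → j ≤ sysR n w → ∀ B', IsBlock n d (S.G j) B' → B ⊆ B' →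
      ¬ Unrepairable n d k F A B'

/-- The family `W` of all maximal `(P,A)`-witness blocks. -/
def MaxWitnessFamily {σ : Type*} (n d k w : ℕ) (S : GridSystem n d k w)
    (F : Set ((Fin d → ℕ) → σ)) (A : (Fin d → ℕ) → σ) :
    Set (Set (Fin d → ℕ)) :=
  {B | ∃ i, IsMaximalWitness n d k w S F A i B}

/-- `Par(B)` for a `G_i`-block `B`: the `G_{i+1}`-block containing `B` if `i < r`
(expressed as the union of all such blocks, of which there is exactly one), and
`[n]^d` for `i = r`. -/
def parentSet (n d k w : ℕ) (S : GridSystem n d k w) (i : ℕ)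
    (B : Set (Fin d → ℕ)) : Set (Fin d → ℕ) :=
  if i = sysR n w then cube n d
  else ⋃₀ {B' | IsBlock n d (S.G (i + 1)) B' ∧ B ⊆ B'}

/-! The partition of `[n]` into `c` intervals with breakpoints `⌊a n / c⌋` has all interval
lengths in `{⌊n/c⌋, ⌊n/c⌋ + 1}`, and every breakpoint for `c` is again a breakpoint for any
multiple `c * b`, since `⌊a n / c⌋ = ⌊a b n / (c b)⌋`. The grid lines of an interval are its
`k - 1` smallest elements, i.e. the `k - 1` points just after its left breakpoint, so the grid
for `c * b` contains the grid for `c`. Taking `c = 2^(r-i)`, whose width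
`⌊n / 2^(r-i)⌋ ≥ w ≥ k` leaves room for the `k - 1` grid lines, gives the system. -/

theorem takeSmallest_Icc_add_one {c e ℓ : ℕ} (h : c + ℓ ≤ e) :
    takeSmallest (Icc (c + 1) e) ℓ = Icc (c + 1) (c + ℓ) := by
  have filter_le : ∀ x ≤ e, (Icc (c + 1) e).filter (· ≤ x) = Icc (c + 1) x := by
    intro x hx
    ext y
    simp only [mem_filter, mem_Icc]
    omega
  ext x
  simp only [takeSmallest, mem_filter, mem_Icc]
  constructor
  · rintro ⟨⟨hcx, hxe⟩, hcard⟩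
    rw [filter_le x hxe, Nat.card_Icc] at hcard
    omega
  · rintro ⟨hcx, hxℓ⟩
    refine ⟨⟨hcx, by omega⟩, ?_⟩
    rw [filter_le x (by omega), Nat.card_Icc]
    omega

theorem gridOf_subset_gridOf {n d k w w' : ℕ} {P : IntervalPartition n w}
    {Q : IntervalPartition n w'}
    (h : ∀ j, ∃ j', takeSmallest (P.I j) (k - 1) ⊆ takeSmallest (Q.I j') (k - 1)) :
    gridOf n d k w P ⊆ gridOf n d k w' Q := by
  rintro x ⟨hx, i, j, hxj⟩
  obtain ⟨j', hj'⟩ := h j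
  exact ⟨hx, i, j', hj' hxj⟩

theorem strictMono_nat_of_add_le_succ {p : ℕ → ℕ} {w : ℕ} (hw : 1 ≤ w)
    (hlow : ∀ a, p a + w ≤ p (a + 1)) : StrictMono p :=
  strictMono_nat_of_lt_succ fun a => by have := hlow a; omega

namespace IntervalPartition

section ofBreakpoints

variable {n w t : ℕ} {p : ℕ → ℕ} (hw : 1 ≤ w) (h0 : p 0 = 0) (ht : p t = n)
  (hlow : ∀ a, p a + w ≤ p (a + 1)) (hhigh : ∀ a, p (a + 1) ≤ p a + w + 1)

def ofBreakpoints : IntervalPartition n w where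
  t := t
  I a := Icc (p a + 1) (p (a + 1))
  interval a := ⟨p a + 1, p (a + 1), by omega, by have := hlow a; omega,
    ht ▸ (strictMono_nat_of_add_le_succ hw hlow).monotone a.2, rfl⟩
  size a := by
    have := hlow a
    have := hhigh a
    rw [Nat.card_Icc]
    omega
  cover x hx := by
    rw [mem_Icc] at hx
    have hex : ∃ j, x ≤ p j := ⟨t, ht ▸ hx.2⟩
    have hpos : Nat.find hex ≠ 0 := fun h => by
      have := Nat.find_spec hex
      rw [h, h0] at this
      omega
    have hle : Nat.find hex ≤ t := Nat.find_min' hex (ht ▸ hx.2)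
    have hlt : ¬ x ≤ p (Nat.find hex - 1) := Nat.find_min hex (by omega)
    refine ⟨⟨Nat.find hex - 1, by omega⟩,
      mem_Icc.2 ⟨Nat.lt_iff_add_one_le.1 (not_le.1 hlt), ?_⟩⟩
    rw [Nat.sub_add_cancel (Nat.one_le_iff_ne_zero.2 hpos)]
    exact Nat.find_spec hex
  ordered j j' hjj x hx y hy := by
    rw [mem_Icc] at hx hy
    have := (strictMono_nat_of_add_le_succ hw hlow).monotone (show (j : ℕ) + 1 ≤ j' from hjj)
    omega

theorem takeSmallest_ofBreakpoints {ℓ : ℕ} (hℓ : ℓ ≤ w) (a : Fin t) :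
    takeSmallest ((ofBreakpoints hw h0 ht hlow hhigh).I a) ℓ = Icc (p a + 1) (p a + ℓ) :=
  takeSmallest_Icc_add_one (by have := hlow a; omega)

end ofBreakpoints

def uniform (n c : ℕ) (h : 1 ≤ n / c) : IntervalPartition n (n / c) :=
  ofBreakpoints (t := c) (p := fun a => a * n / c) h (by simp)
    (Nat.mul_div_cancel_left n (Nat.pos_of_ne_zero fun hc => by simp [hc] at h))
    (fun a => by rw [add_one_mul]; exact Nat.div_add_div_le_add_div)
    (fun a => by rw [add_one_mul]; exact Nat.add_div_le_div_add_div_add_one _ _ _)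

theorem takeSmallest_uniform {n c ℓ : ℕ} (h : 1 ≤ n / c) (hℓ : ℓ ≤ n / c)
    (a : Fin (uniform n c h).t) :
    takeSmallest ((uniform n c h).I a) ℓ = Icc (a * n / c + 1) (a * n / c + ℓ) :=
  takeSmallest_ofBreakpoints _ _ _ _ _ hℓ a

theorem gridOf_uniform_subset_of_dvd {n d k c c' : ℕ} (h : 1 ≤ n / c) (h' : 1 ≤ n / c')
    (hcc' : c ∣ c') (hk : k - 1 ≤ n / c') :
    gridOf n d k (n / c) (uniform n c h) ⊆ gridOf n d k (n / c') (uniform n c' h') := by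
  obtain ⟨b, rfl⟩ := hcc'
  have hb : 0 < b := Nat.pos_of_ne_zero fun hb => by simp [hb] at h'
  have hc : 0 < c := Nat.pos_of_ne_zero fun hc => by simp [hc] at h
  have hkc : k - 1 ≤ n / c :=
    hk.trans (Nat.div_le_div_left (Nat.le_mul_of_pos_right c hb) hc)
  refine gridOf_subset_gridOf fun a => ⟨⟨a * b, Nat.mul_lt_mul_of_pos_right a.2 hb⟩, ?_⟩
  rw [takeSmallest_uniform h hkc, takeSmallest_uniform h' hk]
  simp only [mul_right_comm _ b n, Nat.mul_div_mul_right _ _ hb, subset_refl]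

end IntervalPartition

theorem le_div_two_pow_sysR {n w : ℕ} (hw : 0 < w) (hwn : w ≤ n) :
    w ≤ n / 2 ^ sysR n w := by
  rw [Nat.le_div_iff_mul_le (by positivity)]
  calc w * 2 ^ sysR n w ≤ w * (n / w) :=
        Nat.mul_le_mul_left w (Nat.pow_log_le_self 2 (Nat.div_pos hwn hw).ne')
    _ ≤ n := Nat.mul_div_le n w

theorem gridSystem_exists_general (n d k w : ℕ) (hk : 2 ≤ k)
    (hkw : k ≤ w) (hwn : w ≤ n) :
    Nonempty (GridSystem n d k w) := by
  set r := sysR n w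
  have hwidth : ∀ m ≤ r, w ≤ n / 2 ^ m := fun m hm =>
    (le_div_two_pow_sysR (by omega) hwn).trans
      (Nat.div_le_div_left (Nat.pow_le_pow_right two_pos hm) (by positivity))
  have hpos : ∀ i, 1 ≤ n / 2 ^ (r - i) := fun i => by
    have := hwidth (r - i) (Nat.sub_le r i)
    omega
  refine ⟨⟨fun i => gridOf n d k _ (.uniform n (2 ^ (r - i)) (hpos i)),
    fun i _ => ⟨_, rfl⟩, fun i j hji _ => ?_⟩⟩
  refine IntervalPartition.gridOf_uniform_subset_of_dvd _ _
    (Nat.pow_dvd_pow 2 (Nat.sub_le_sub_left hji r)) ?_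
  have := hwidth (r - j) (Nat.sub_le r j)
  omega

/-- For all integers `d ≥ 1` and `2 ≤ k ≤ w ≤ n`, an
`(n,d,k,w)`-system of grids exists. -/
theorem gridSystem_exists (n d k w : ℕ) (hd : 1 ≤ d) (hk : 2 ≤ k)
    (hkw : k ≤ w) (hwn : w ≤ n) :
    Nonempty (GridSystem n d k w) :=
  gridSystem_exists_general n d k w hk hkw hwn
end
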